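/- arXiv:2604.17490 — 7 statements merged into one kernel-verified Lean document; each statement's English description precedes it below -/
import Mathlib

section
/- Given probabilities q_1,...,q_n in [0,1] with sum_{i=1}^n q_i <= n-1, there exist non-negative real coefficients p_I indexed by subsets I of {1,...,n} with 2 <= |I| <= n-1, such that for every i, the sum of p_I over all I containing i is at most q_i, and sum over all I of (|I|-1) p_I >= sum_{i=1}^n q_i - 1. -/
/-!
Read `p I` as the probability that a random set `R ⊆ {1, …, n}` equals `I`, where the
events `i ∈ R` have probabilities `q i`. Then `∑ I, (#I - 1) p I = E #R - 1 = ∑ q - 1`, and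
restricting to `2 ≤ #I ≤ n - 1` only drops nonpositive terms, provided `R` is never the full
set. Such a coupling exists by the Fréchet bound: adding the points one at a time, each new
point can be attached to the current full set with only the forced mass
`max 0 (P(R = A) + q j - 1)`, so that `P(R = A) ≤ max 0 (∑_{i ∈ A} q i - #A + 1)`, which
vanishes for `A = univ` when `∑ q ≤ n - 1`.
-/

open Finset

lemma exists_sum_eq_of_le_sum {α : Type*} (s : Finset α) {b : α → ℝ} {t : ℝ}
    (hb : ∀ a ∈ s, 0 ≤ b a) (ht₀ : 0 ≤ t) (ht : t ≤ ∑ a ∈ s, b a) :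
    ∃ x : α → ℝ, (∀ a ∈ s, 0 ≤ x a ∧ x a ≤ b a) ∧ ∑ a ∈ s, x a = t := by
  set B := ∑ a ∈ s, b a
  refine ⟨fun a => t / B * b a, fun a ha => ⟨?_, ?_⟩, ?_⟩
  · exact mul_nonneg (div_nonneg ht₀ (sum_nonneg hb)) (hb a ha)
  · exact mul_le_of_le_one_left (hb a ha) (div_le_one_of_le₀ ht (ht₀.trans ht))
  · rcases eq_or_ne B 0 with hB | hB
    · simp [hB, le_antisymm (hB ▸ ht) ht₀]
    · rw [← mul_sum, div_mul_cancel₀ t hB]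

lemma max_zero_max_zero_add {u v : ℝ} (hv : v ≤ 0) : max 0 (max 0 u + v) = max 0 (u + v) := by
  rcases le_total u 0 with hu | hu
  · rw [max_eq_left hu, zero_add, max_eq_left hv, max_eq_left (by linarith)]
  · rw [max_eq_right hu]

variable {ι : Type*} [DecidableEq ι]

structure IsBernoulliCoupling (A : Finset ι) (q : ι → ℝ) (μ : Finset ι → ℝ) : Prop where
  nonneg : ∀ I ∈ A.powerset, 0 ≤ μ I
  sum_eq_one : ∑ I ∈ A.powerset, μ I = 1
  marginal_eq : ∀ i ∈ A, ∑ I ∈ A.powerset with i ∈ I, μ I = q i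

/-- `x I` is the part of the mass of `I` that is moved to `insert j I`. -/
def insertLaw (j : ι) (μ x : Finset ι → ℝ) (J : Finset ι) : ℝ :=
  if j ∈ J then x (J.erase j) else μ J - x J

namespace IsBernoulliCoupling

variable {A : Finset ι} {q : ι → ℝ} {μ : Finset ι → ℝ}

theorem sum_card_sub_one_mul (hμ : IsBernoulliCoupling A q μ) :
    ∑ I ∈ A.powerset, ((#I : ℝ) - 1) * μ I = ∑ i ∈ A, q i - 1 := by
  have hcard : ∑ I ∈ A.powerset, (#I : ℝ) * μ I = ∑ i ∈ A, q i := calc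
    ∑ I ∈ A.powerset, (#I : ℝ) * μ I
        = ∑ I ∈ A.powerset, ∑ i ∈ A, if i ∈ I then μ I else 0 := by
      refine sum_congr rfl fun I hI => ?_
      rw [sum_ite_mem, inter_eq_right.mpr (mem_powerset.mp hI), sum_const, nsmul_eq_mul]
    _ = ∑ i ∈ A, q i := by
      rw [sum_comm]
      exact sum_congr rfl fun i hi => by rw [← sum_filter, hμ.marginal_eq i hi]
  simp only [sub_mul, one_mul, sum_sub_distrib, hcard, hμ.sum_eq_one]

theorem sum_powerset_insert_mul_insertLaw {j : ι} (hj : j ∉ A) (x w : Finset ι → ℝ) :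
    ∑ J ∈ (insert j A).powerset, w J * insertLaw j μ x J
      = ∑ I ∈ A.powerset, (w I * (μ I - x I) + w (insert j I) * x I) := by
  rw [sum_powerset_insert hj, ← sum_add_distrib]
  refine sum_congr rfl fun I hI => ?_
  have hjI : j ∉ I := fun h => hj (mem_powerset.mp hI h)
  simp [insertLaw, hjI]

theorem extend (hμ : IsBernoulliCoupling A q μ) {j : ι} (hj : j ∉ A) {x : Finset ι → ℝ}
    (hx : ∀ I ∈ A.powerset, 0 ≤ x I ∧ x I ≤ μ I) (hxq : ∑ I ∈ A.powerset, x I = q j) :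
    IsBernoulliCoupling (insert j A) q (insertLaw j μ x) where
  nonneg J hJ := by
    unfold insertLaw
    split_ifs with hjJ
    · refine (hx _ ?_).1
      simpa [subset_insert_iff] using hJ
    · refine sub_nonneg.mpr (hx J ?_).2
      simpa [subset_insert_iff_of_notMem hjJ] using hJ
  sum_eq_one := by
    simpa [hμ.sum_eq_one] using sum_powerset_insert_mul_insertLaw (μ := μ) hj x 1
  marginal_eq i hi := by
    have h := sum_powerset_insert_mul_insertLaw (μ := μ) hj x (fun J => if i ∈ J then 1 else 0)
    simp only [ite_mul, one_mul, zero_mul] at h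
    rw [sum_filter, h]
    rcases mem_insert.mp hi with rfl | hiA
    · rw [← hxq]
      refine sum_congr rfl fun I hI => ?_
      have hiI : i ∉ I := fun h => hj (mem_powerset.mp hI h)
      simp [hiI]
    · have hij : i ≠ j := fun h => hj (h ▸ hiA)
      rw [← hμ.marginal_eq i hiA, sum_filter]
      refine sum_congr rfl fun I _ => ?_
      simp only [mem_insert, hij, false_or]
      split_ifs <;> ring

theorem exists_extend (hμ : IsBernoulliCoupling A q μ) {j : ι} (hj : j ∉ A)
    (hqj : q j ∈ Set.Icc 0 1) :
    ∃ ν, IsBernoulliCoupling (insert j A) q ν ∧ ν (insert j A) ≤ max 0 (μ A + q j - 1) := by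
  obtain ⟨hqj₀, hqj₁⟩ := hqj
  have hAA : A ∈ A.powerset := mem_powerset_self A
  have hμA₀ := hμ.nonneg A hAA
  -- the mass moved from `A` itself is capped at the forced amount
  set b := Function.update μ A (max 0 (μ A + q j - 1))
  have hb : ∀ I ∈ A.powerset, 0 ≤ b I ∧ b I ≤ μ I := by
    intro I hI
    rcases eq_or_ne I A with rfl | hIA
    · simp only [b, Function.update_self]
      exact ⟨le_max_left _ _, max_le hμA₀ (by linarith)⟩
    · simp only [b, Function.update_of_ne hIA]
      exact ⟨hμ.nonneg I hI, le_rfl⟩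
  have hqb : q j ≤ ∑ I ∈ A.powerset, b I := by
    have hsplit := sum_eq_add_sum_sdiff_singleton_of_mem hAA μ
    rw [sum_update_of_mem hAA]
    linarith [le_max_right 0 (μ A + q j - 1), hμ.sum_eq_one]
  obtain ⟨x, hxb, hxq⟩ := exists_sum_eq_of_le_sum _ (fun I hI => (hb I hI).1) hqj₀ hqb
  have hxμ : ∀ I ∈ A.powerset, 0 ≤ x I ∧ x I ≤ μ I :=
    fun I hI => ⟨(hxb I hI).1, (hxb I hI).2.trans (hb I hI).2⟩
  refine ⟨_, hμ.extend hj hxμ hxq, ?_⟩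
  calc insertLaw j μ x (insert j A) = x A := by simp [insertLaw, erase_insert hj]
    _ ≤ max 0 (μ A + q j - 1) := by simpa [b] using (hxb A hAA).2

end IsBernoulliCoupling

theorem exists_isBernoulliCoupling {q : ι → ℝ} (A : Finset ι)
    (hq : ∀ i ∈ A, q i ∈ Set.Icc 0 1) :
    ∃ μ, IsBernoulliCoupling A q μ ∧ μ A ≤ max 0 (∑ i ∈ A, q i - #A + 1) := by
  induction A using Finset.induction_on with
  | empty => refine ⟨fun I => if I = ∅ then 1 else 0, ⟨?_, ?_, ?_⟩, ?_⟩ <;> simp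
  | insert j A hj ih =>
    obtain ⟨μ, hμ, hμA⟩ := ih fun i hi => hq i (mem_insert_of_mem hi)
    have hqj := hq j (mem_insert_self j A)
    obtain ⟨ν, hν, hνA⟩ := hμ.exists_extend hj hqj
    refine ⟨ν, hν, ?_⟩
    calc ν (insert j A) ≤ max 0 (μ A + q j - 1) := hνA
      _ ≤ max 0 (max 0 (∑ i ∈ A, q i - #A + 1) + q j - 1) := by gcongr
      _ = max 0 (∑ i ∈ insert j A, q i - #(insert j A) + 1) := by
        rw [add_sub_assoc, max_zero_max_zero_add (by linarith [hqj.2]), sum_insert hj,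
          card_insert_of_notMem hj]
        push_cast
        ring_nf

theorem stmt2_general (n : ℕ) (q : Fin n → ℝ) (hq : ∀ i, q i ∈ Set.Icc (0 : ℝ) 1)
    (hsum : ∑ i, q i ≤ (n : ℝ) - 1) :
    ∃ p : Finset (Fin n) → ℝ,
      (∀ I, 0 ≤ p I) ∧
      (∀ i, ∑ I ∈ Finset.univ.filter
          (fun I : Finset (Fin n) => 2 ≤ I.card ∧ I.card ≤ n - 1 ∧ i ∈ I), p I ≤ q i) ∧
      (∑ i, q i) - 1 ≤ ∑ I ∈ Finset.univ.filter
          (fun I : Finset (Fin n) => 2 ≤ I.card ∧ I.card ≤ n - 1), ((I.card : ℝ) - 1) * p I := by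
  obtain ⟨μ, hμ, hμ_univ⟩ := exists_isBernoulliCoupling univ fun i _ => hq i
  have hμ₀ : ∀ I, 0 ≤ μ I := fun I => hμ.nonneg I (mem_powerset.mpr (subset_univ I))
  replace hμ_univ : μ univ = 0 :=
    le_antisymm (hμ_univ.trans (max_le le_rfl (by rw [card_univ, Fintype.card_fin]; linarith)))
      (hμ₀ univ)
  refine ⟨μ, hμ₀, fun i => ?_, ?_⟩
  · calc _ ≤ ∑ I with i ∈ I, μ I :=
          sum_le_sum_of_subset_of_nonneg (fun I => by simp +contextual)
            fun I _ _ => hμ₀ I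
      _ = q i := by simpa using hμ.marginal_eq i (mem_univ i)
  · calc (∑ i, q i) - 1 = ∑ I, ((#I : ℝ) - 1) * μ I := by
          simpa using hμ.sum_card_sub_one_mul.symm
      _ ≤ _ := by
        rw [sum_filter]
        refine sum_le_sum fun I _ => ?_
        split_ifs with hI
        · exact le_rfl
        rcases eq_or_ne I univ with rfl | hI_univ
        · rw [hμ_univ, mul_zero]
        have hI_card : #I < n := by simpa using (card_lt_iff_ne_univ I).mpr hI_univ
        have hI_small : (#I : ℝ) ≤ 1 := by exact_mod_cast (by omega : #I ≤ 1)
        exact mul_nonpos_of_nonpos_of_nonneg (sub_nonpos.mpr hI_small) (hμ₀ I)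

theorem stmt2 (n : ℕ) (hn : 3 ≤ n) (q : Fin n → ℝ) (hq : ∀ i, q i ∈ Set.Icc (0 : ℝ) 1)
    (hsum : ∑ i, q i ≤ (n : ℝ) - 1) :
    ∃ p : Finset (Fin n) → ℝ,
      (∀ I, 0 ≤ p I) ∧
      (∀ i, ∑ I ∈ Finset.univ.filter
          (fun I : Finset (Fin n) => 2 ≤ I.card ∧ I.card ≤ n - 1 ∧ i ∈ I), p I ≤ q i) ∧
      (∑ i, q i) - 1 ≤ ∑ I ∈ Finset.univ.filter
          (fun I : Finset (Fin n) => 2 ≤ I.card ∧ I.card ≤ n - 1), ((I.card : ℝ) - 1) * p I :=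
  stmt2_general n q hq hsum
end

section
/- For n >= 3 and q_1,...,q_n in [0,1], the maximum of sum_{I in M} (|I|-1) p_I over non-negative coefficients (p_I)_{I in M} satisfying sum_{I in M_i} p_I <= q_i for all i, equals min{ ((n-2)/(n-1)) * sum_i q_i, sum_i q_i - max_i q_i }. -/
/-!
Upper bound: by double counting, `∑ #I p_I` over `M` is the sum of the loads `∑_{I ∋ i} p_I ≤ q i`.
On `M` we have `#I - 1 ≤ (n-2)/(n-1) · #I` (as `#I ≤ n - 1`) and `#I - 1 ≤ #(I \ {j})` for every
`j`, which gives the two terms of the minimum, the second one with `j` a maximiser of `q`.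

Lower bound: let `m = max (max q) ((∑ q) / (n-1))`. Then `q i ≤ m` and `∑ q ≤ (n-1) m`, which is
exactly what is needed for a weighting of total mass `m` of the proper subsets of `{1,…,n}` whose
marginals are `q`. For such a weighting `∑ (#I - 1) p_I = ∑ q - m`, the claimed minimum, and
dropping the sets of size at most one only increases this sum. Such weightings, for marginals `r`
with `r i ≤ m` and `∑ r ≤ (#S - 1) m`, are built by induction on the ground set `insert i₀ S`:
`S` itself receives the least mass `c` that keeps the problem on `S` with marginals `r - c` and
mass `m - c` feasible, and `i₀` is added to a proportional share `r i₀ / (m - c)` of the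
weighting obtained for `S`.
-/

open Finset

namespace SubsetWeighting

variable {α β : Type*} [DecidableEq α]

def pushforward [Fintype β] (f : β → Finset α) (p : β → ℝ) (I : Finset α) : ℝ :=
  ∑ b with f b = I, p b

section pushforward

variable [Fintype β] (f : β → Finset α) (p : β → ℝ)

theorem pushforward_nonneg {p : β → ℝ} (hp : ∀ b, 0 ≤ p b) (I : Finset α) :
    0 ≤ pushforward f p I :=
  sum_nonneg fun b _ => hp b

theorem exists_ne_zero_of_pushforward_ne_zero {I : Finset α} (h : pushforward f p I ≠ 0) :
    ∃ b, f b = I ∧ p b ≠ 0 := by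
  obtain ⟨b, hb, hpb⟩ := exists_ne_zero_of_sum_ne_zero h
  exact ⟨b, (mem_filter.1 hb).2, hpb⟩

end pushforward

theorem sum_card_inter_mul (s : Finset (Finset α)) (T : Finset α) (p : Finset α → ℝ) :
    ∑ I ∈ s, #(I ∩ T) * p I = ∑ i ∈ T, ∑ I ∈ s with i ∈ I, p I := by
  calc ∑ I ∈ s, #(I ∩ T) * p I = ∑ I ∈ s, ∑ i ∈ T, if i ∈ I then p I else 0 := by
        refine sum_congr rfl fun I _ => ?_
        rw [← sum_filter, sum_const, filter_mem_eq_inter, inter_comm, nsmul_eq_mul]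
    _ = ∑ i ∈ T, ∑ I ∈ s with i ∈ I, p I := by
        rw [sum_comm]
        simp_rw [sum_filter]

variable [Fintype α]

def marginal (p : Finset α → ℝ) (i : α) : ℝ := ∑ J with i ∈ J, p J

def IsSsubsetWeighting (S : Finset α) (p : Finset α → ℝ) : Prop :=
  (∀ J, 0 ≤ p J) ∧ ∀ J, ¬J ⊂ S → p J = 0

section marginal

variable [Fintype β] (f : β → Finset α) (p : β → ℝ)

theorem marginal_pushforward (i : α) :
    marginal (pushforward f p) i = ∑ b with i ∈ f b, p b := by
  simpa [marginal, pushforward] using sum_fiberwise_eq_sum_filter univ {J | i ∈ J} f p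

theorem sum_pushforward : ∑ I, pushforward f p I = ∑ b, p b :=
  sum_fiberwise univ f p

end marginal

theorem IsSsubsetWeighting.marginal_eq_zero {S : Finset α} {p : Finset α → ℝ}
    (hp : IsSsubsetWeighting S p) {i : α} (hi : i ∉ S) : marginal p i = 0 :=
  sum_eq_zero fun J hJ => hp.2 J fun hJS => hi (hJS.subset (mem_filter.1 hJ).2)

theorem IsSsubsetWeighting.exists_insert {S : Finset α} {p : Finset α → ℝ}
    (hp : IsSsubsetWeighting S p) {i₀ : α} (hi₀ : i₀ ∉ S) {c t : ℝ} (hc : 0 ≤ c)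
    (ht₀ : 0 ≤ t) (ht₁ : t ≤ 1) :
    ∃ p' : Finset α → ℝ, IsSsubsetWeighting (insert i₀ S) p' ∧
      marginal p' i₀ = t * ∑ J, p J ∧ (∀ i ∈ S, marginal p' i = c + marginal p i) ∧
      ∑ J, p' J = c + ∑ J, p J := by
  set p' : Finset α → ℝ := fun J =>
    (if J = S then c else 0) + t * pushforward (insert i₀) p J + (1 - t) * p J with hp'
  have hmarginal (i : α) : marginal p' i =
      (if i ∈ S then c else 0) + t * ∑ J with i ∈ insert i₀ J, p J + (1 - t) * marginal p i := by
    have hpush := marginal_pushforward (insert i₀) p i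
    simp only [marginal] at hpush ⊢
    simp only [hp', sum_add_distrib, ← mul_sum, hpush]
    simp
  refine ⟨p', ⟨fun J => ?_, fun J hJ => ?_⟩, ?_, fun i hi => ?_, ?_⟩
  · exact add_nonneg (add_nonneg (ite_nonneg hc le_rfl)
      (mul_nonneg ht₀ (pushforward_nonneg _ hp.1 J)))
      (mul_nonneg (sub_nonneg.2 ht₁) (hp.1 J))
  · have hJS : J ≠ S := by rintro rfl; exact hJ (ssubset_insert hi₀)
    have hpush : pushforward (insert i₀) p J = 0 := by
      by_contra h
      obtain ⟨K, rfl, hK⟩ := exists_ne_zero_of_pushforward_ne_zero _ _ h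
      have hKS : K ⊂ S := not_not.1 ((hp.2 K).mt hK)
      obtain ⟨x, hxS, hxK⟩ := exists_of_ssubset hKS
      refine hJ ((ssubset_iff_of_subset (insert_subset_insert _ hKS.subset)).2
        ⟨x, mem_insert_of_mem hxS, ?_⟩)
      grind
    have : p J = 0 := hp.2 J fun h => hJ (h.trans (ssubset_insert hi₀))
    simp [hp', hJS, hpush, this]
  · rw [hmarginal, if_neg hi₀, hp.marginal_eq_zero hi₀]
    simp
  · have : i ≠ i₀ := by rintro rfl; exact hi₀ hi
    rw [hmarginal]
    simp only [mem_insert, this, false_or, if_pos hi]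
    change c + t * marginal p i + _ = _
    ring
  · simp only [hp', sum_add_distrib, ← mul_sum, sum_pushforward, sum_ite_eq', mem_univ,
      if_true]
    ring

theorem exists_isSsubsetWeighting_marginal_eq (S : Finset α) {m : ℝ} {r : α → ℝ}
    (hm : 0 ≤ m) (hr₀ : ∀ i ∈ S, 0 ≤ r i) (hrm : ∀ i ∈ S, r i ≤ m)
    (hsum : ∑ i ∈ S, r i ≤ (#S - 1 : ℝ) * m) :
    ∃ p, IsSsubsetWeighting S p ∧ (∀ i ∈ S, marginal p i = r i) ∧ ∑ J, p J = m := by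
  induction S using Finset.induction_on generalizing m r with
  | empty =>
    refine ⟨0, ⟨fun _ => le_rfl, fun _ _ => rfl⟩, by simp, ?_⟩
    simp only [sum_empty, card_empty, CharP.cast_eq_zero] at hsum
    simp only [Pi.zero_apply, sum_const_zero]
    linarith
  | insert i₀ S hi₀ ih =>
    have hsum' : r i₀ + ∑ i ∈ S, r i ≤ #S * m := by
      simpa [sum_insert hi₀, card_insert_of_notMem hi₀] using hsum
    set c := max (∑ i ∈ S, r i - (#S - 1) * m) 0
    have hc_le (j : α) (hj : j ∈ S) : c ≤ r j := by
      refine max_le ?_ (hr₀ j (mem_insert_of_mem hj))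
      have := sum_le_card_nsmul (S.erase j) r m
        fun i hi => hrm i (mem_insert_of_mem (mem_of_mem_erase hi))
      rw [sum_erase_eq_sub hj, nsmul_eq_mul, cast_card_erase_of_mem hj] at this
      linarith
    have hr₀c : r i₀ ≤ m - c := by
      have : c ≤ m - r i₀ := max_le (by linarith) (by linarith [hrm i₀ (mem_insert_self i₀ S)])
      linarith
    have hmc : 0 ≤ m - c := (hr₀ i₀ (mem_insert_self i₀ S)).trans hr₀c
    obtain ⟨p, hp, hpr, hpm⟩ := ih (m := m - c) (r := fun i => r i - c) hmc
      (fun i hi => sub_nonneg.2 (hc_le i hi))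
      (fun i hi => sub_le_sub_right (hrm i (mem_insert_of_mem hi)) c)
      (by
        rw [sum_sub_distrib, sum_const, nsmul_eq_mul]
        linarith [le_max_left (∑ i ∈ S, r i - (#S - 1) * m) 0])
    obtain ⟨p', hp', hp'i₀, hp'S, hp'm⟩ := hp.exists_insert hi₀ (le_max_right _ _)
      (div_nonneg (hr₀ i₀ (mem_insert_self i₀ S)) hmc) (div_le_one_of_le₀ hr₀c hmc)
    refine ⟨p', hp', fun i hi => ?_, by rw [hp'm, hpm]; ring⟩
    rcases mem_insert.1 hi with rfl | hi
    · rw [hp'i₀, hpm]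
      rcases hmc.eq_or_lt with h | h
      · have : r i = 0 := le_antisymm (h ▸ hr₀c) (hr₀ i hi)
        simp [this]
      · exact div_mul_cancel₀ _ h.ne'
    · rw [hp'S i hi, hpr i hi]
      ring

theorem sum_card_sub_one_mul_le_of_card_le {s : Finset (Finset α)} {p : Finset α → ℝ} {N : ℕ}
    (hN : 2 ≤ N) (hp : ∀ I ∈ s, 0 ≤ p I) (hs : ∀ I ∈ s, #I ≤ N - 1) :
    ∑ I ∈ s, (#I - 1 : ℝ) * p I ≤
      ((N : ℝ) - 2) / ((N : ℝ) - 1) * ∑ i, ∑ I ∈ s with i ∈ I, p I := by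
  have hN' : (1 : ℝ) < N := by exact_mod_cast hN
  rw [← sum_card_inter_mul, mul_sum]
  refine sum_le_sum fun I hI => ?_
  have hIN : #I + 1 ≤ N := by have := hs I hI; omega
  have hIN : (#I : ℝ) + 1 ≤ N := by exact_mod_cast hIN
  have hcoef : (#I - 1 : ℝ) ≤ ((N : ℝ) - 2) / ((N : ℝ) - 1) * #I := by
    rw [div_mul_eq_mul_div, le_div_iff₀ (by linarith)]
    nlinarith
  rw [inter_univ, ← mul_assoc]
  exact mul_le_mul_of_nonneg_right hcoef (hp I hI)

theorem sum_card_sub_one_mul_le_sum_erase {s : Finset (Finset α)} {p : Finset α → ℝ}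
    (hp : ∀ I ∈ s, 0 ≤ p I) (j : α) :
    ∑ I ∈ s, (#I - 1 : ℝ) * p I ≤ ∑ i ∈ univ.erase j, ∑ I ∈ s with i ∈ I, p I := by
  rw [← sum_card_inter_mul]
  refine sum_le_sum fun I hI => mul_le_mul_of_nonneg_right ?_ (hp I hI)
  rw [inter_erase, inter_univ]
  have : #I ≤ #(I.erase j) + 1 := by
    have := pred_card_le_card_erase (s := I) (a := j)
    omega
  have : (#I : ℝ) ≤ #(I.erase j) + 1 := by exact_mod_cast this
  linarith

theorem sum_card_sub_one_mul_eq (p : Finset α → ℝ) :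
    ∑ I, (#I - 1 : ℝ) * p I = ∑ i, marginal p i - ∑ I, p I := by
  simp only [sub_mul, one_mul, sum_sub_distrib, marginal]
  simpa using sum_card_inter_mul univ univ p

theorem IsSsubsetWeighting.sum_card_sub_one_mul_le {p : Finset α → ℝ}
    (hp : IsSsubsetWeighting univ p) :
    ∑ I, (#I - 1 : ℝ) * p I ≤
      ∑ I with 2 ≤ #I ∧ #I ≤ Fintype.card α - 1, (#I - 1 : ℝ) * p I := by
  rw [← sum_filter_add_sum_filter_not univ
    (fun I : Finset α => 2 ≤ #I ∧ #I ≤ Fintype.card α - 1)]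
  refine add_le_of_nonpos_right (sum_nonpos fun I hI => ?_)
  by_cases hIu : I ⊂ univ
  · have hcard : #I < Fintype.card α := card_univ (α := α) ▸ card_lt_card hIu
    have hI' := (mem_filter.1 hI).2
    have : (#I : ℝ) ≤ 1 := by exact_mod_cast (by omega : #I ≤ 1)
    exact mul_nonpos_of_nonpos_of_nonneg (by linarith) (hp.1 I)
  · simp [hp.2 I hIu]

theorem sum_card_sub_one_mul_le_min {s : Finset (Finset α)} {p : Finset α → ℝ} {q : α → ℝ}
    {N : ℕ} (hN : 2 ≤ N) (hp : ∀ I ∈ s, 0 ≤ p I) (hs : ∀ I ∈ s, #I ≤ N - 1)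
    (hpq : ∀ i, ∑ I ∈ s with i ∈ I, p I ≤ q i) (j : α) :
    ∑ I ∈ s, (#I - 1 : ℝ) * p I ≤ min ((N - 2) / (N - 1) * ∑ i, q i) (∑ i, q i - q j) := by
  have hN' : (2 : ℝ) ≤ N := by exact_mod_cast hN
  refine le_min ((sum_card_sub_one_mul_le_of_card_le hN hp hs).trans ?_)
    ((sum_card_sub_one_mul_le_sum_erase hp j).trans ?_)
  · exact mul_le_mul_of_nonneg_left (sum_le_sum fun i _ => hpq i)
      (div_nonneg (by linarith) (by linarith))
  · exact (sum_le_sum fun i _ => hpq i).trans_eq (sum_erase_eq_sub (mem_univ j))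

theorem exists_min_le_sum_card_sub_one_mul {q : α → ℝ} (hα : 2 ≤ Fintype.card α)
    (hq : ∀ i, 0 ≤ q i) {j : α} (hqj : ∀ i, q i ≤ q j) :
    ∃ p : Finset α → ℝ, (∀ I, 0 ≤ p I) ∧
      (∀ i, ∑ I with 2 ≤ #I ∧ #I ≤ Fintype.card α - 1 ∧ i ∈ I, p I ≤ q i) ∧
      min ((Fintype.card α - 2) / (Fintype.card α - 1) * ∑ i, q i) (∑ i, q i - q j) ≤
        ∑ I with 2 ≤ #I ∧ #I ≤ Fintype.card α - 1, (#I - 1 : ℝ) * p I := by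
  have hN : (0 : ℝ) < Fintype.card α - 1 := by
    have : (2 : ℝ) ≤ Fintype.card α := by exact_mod_cast hα
    linarith
  set N : ℝ := (Fintype.card α : ℝ)
  obtain ⟨p, hp, hpq, hpm⟩ := exists_isSsubsetWeighting_marginal_eq univ
    (m := max (q j) ((∑ i, q i) / (N - 1))) (r := q) (le_max_of_le_left (hq j))
    (fun i _ => hq i) (fun i _ => le_max_of_le_left (hqj i)) (by
      calc ∑ i, q i = (N - 1) * ((∑ i, q i) / (N - 1)) := (mul_div_cancel₀ _ hN.ne').symm
        _ ≤ (N - 1) * max (q j) ((∑ i, q i) / (N - 1)) :=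
          mul_le_mul_of_nonneg_left (le_max_right _ _) hN.le)
  refine ⟨p, hp.1, fun i => (sum_le_sum_of_subset_of_nonneg
    (monotone_filter_right _ fun I _ hI => hI.2.2) fun I _ _ => hp.1 I).trans
      (hpq i (mem_univ i)).le, ?_⟩
  calc min ((N - 2) / (N - 1) * ∑ i, q i) (∑ i, q i - q j)
      = ∑ i, q i - max (q j) ((∑ i, q i) / (N - 1)) := by
        rw [min_comm, ← min_sub_sub_left]
        congr 2
        field_simp
        ring
    _ = ∑ I, (#I - 1 : ℝ) * p I := by
        rw [sum_card_sub_one_mul_eq, hpm, sum_congr rfl fun i hi => hpq i hi]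
    _ ≤ _ := hp.sum_card_sub_one_mul_le

end SubsetWeighting

open SubsetWeighting

theorem stmt3 (n : ℕ) (hn : 3 ≤ n) (q : Fin n → ℝ) (hq : ∀ i, q i ∈ Set.Icc (0 : ℝ) 1) :
    IsGreatest
      {s : ℝ | ∃ p : Finset (Fin n) → ℝ, (∀ I, 0 ≤ p I) ∧
        (∀ i, ∑ I ∈ Finset.univ.filter
            (fun I : Finset (Fin n) => 2 ≤ I.card ∧ I.card ≤ n - 1 ∧ i ∈ I), p I ≤ q i) ∧
        s = ∑ I ∈ Finset.univ.filter
            (fun I : Finset (Fin n) => 2 ≤ I.card ∧ I.card ≤ n - 1), ((I.card : ℝ) - 1) * p I}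
      (min (((n : ℝ) - 2) / ((n : ℝ) - 1) * ∑ i, q i)
        ((∑ i, q i) - Finset.univ.sup' (Finset.univ_nonempty_iff.mpr ⟨⟨0, by omega⟩⟩) q)) := by
  classical
  obtain ⟨j, -, hj⟩ := exists_mem_eq_sup' (univ_nonempty_iff.mpr ⟨⟨0, by omega⟩⟩) q
  have hqj (i : Fin n) : q i ≤ q j := hj ▸ le_sup' q (mem_univ i)
  rw [hj]
  set M : Finset (Finset (Fin n)) := {I | 2 ≤ #I ∧ #I ≤ n - 1}
  have hupper (p : Finset (Fin n) → ℝ) (hp : ∀ I, 0 ≤ p I)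
      (hpq : ∀ i, ∑ I with 2 ≤ #I ∧ #I ≤ n - 1 ∧ i ∈ I, p I ≤ q i) :
      ∑ I ∈ M, (#I - 1 : ℝ) * p I ≤ min ((n - 2) / (n - 1) * ∑ i, q i) (∑ i, q i - q j) :=
    sum_card_sub_one_mul_le_min (by omega) (fun I _ => hp I)
      (fun I hI => (mem_filter.1 hI).2.2)
      (fun i => by simpa only [M, filter_filter, and_assoc] using hpq i) j
  obtain ⟨p, hp, hpq, hle⟩ := exists_min_le_sum_card_sub_one_mul (α := Fin n)
    (by simp only [Fintype.card_fin]; omega) (fun i => (hq i).1) hqj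
  simp only [Fintype.card_fin] at hpq hle
  exact ⟨⟨p, hp, hpq, le_antisymm hle (hupper p hp hpq)⟩,
    fun s ⟨p, hp, hpq, hs⟩ => hs ▸ hupper p hp hpq⟩
end

section
/- If each q_i in [0,1] and sum_{i=1}^n q_i <= n - 1, then there exists a probability measure on [0,infinity)^n \ (0,infinity)^n (the boundary of the non-negative orthant) whose i-th marginal survival probability at 0 equals q_i for each i. Consequently, for prescribed marginal distributions F_1,...,F_n on [0,infinity), a jointly exclusive random vector with these marginals exists if and only if sum_i (1 - F_i(0)) <= n - 1. -/
open MeasureTheory Set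
open scoped ENNReal

/-!
Write `lᵢ = P(Xᵢ ≤ 0) = 1 - F̄ᵢ(0)`. If `X` is jointly exclusive, the events `{Xᵢ ≤ 0}` cover
the sample space up to a null set, so `∑ lᵢ ≥ 1` by the union bound. Conversely, if `∑ lᵢ ≥ 1`,
intervals of lengths `lᵢ` laid end to end in `[0, 1)`, each pushed back where it would stick out,
cover `[0, 1)`. Draw `U` uniformly from `[0, 1)` and, independently, `Yᵢ` from the law of `Xᵢ`
conditioned on `(0, ∞)`; put `Xᵢ = 0` when `U` lies in the `i`-th interval and `Xᵢ = Yᵢ`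
otherwise. Each `Xᵢ` has the prescribed law, and since every `U` lies in some interval, some
`Xᵢ` vanishes.
-/

lemma exists_Ico_cover {ι : Type*} [DecidableEq ι] (l : ι → ℝ) (hl : ∀ i, l i ∈ Icc (0 : ℝ) 1)
    (s : Finset ι) :
    ∃ a : ι → ℝ, (∀ i, 0 ≤ a i ∧ a i + l i ≤ 1) ∧
      Ico 0 (min 1 (∑ i ∈ s, l i)) ⊆ ⋃ i ∈ s, Ico (a i) (a i + l i) := by
  induction s using Finset.induction_on with
  | empty => exact ⟨0, fun i => by simpa using (hl i).2, by simp⟩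
  | insert j s hj ih =>
    obtain ⟨a, ha, hcover⟩ := ih
    set S := ∑ i ∈ s, l i
    have hS : 0 ≤ S := Finset.sum_nonneg fun i _ => (hl i).1
    refine ⟨Function.update a j (min S (1 - l j)), fun i => ?_, ?_⟩
    · rcases eq_or_ne i j with rfl | hij
      · simp only [Function.update_self]
        exact ⟨le_min hS (by linarith [(hl i).2]), by linarith [min_le_right S (1 - l i)]⟩
      · simpa only [Function.update_of_ne hij] using ha i
    · rintro t ⟨ht0, ht⟩
      rw [Finset.sum_insert hj, lt_min_iff] at ht
      simp only [Finset.set_biUnion_insert, Function.update_self]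
      rcases lt_or_ge t S with htS | hSt
      · refine Or.inr ?_
        obtain ⟨i, hi, hti⟩ := mem_iUnion₂.mp (hcover ⟨ht0, lt_min ht.1 htS⟩)
        have hij : i ≠ j := fun h => hj (h ▸ hi)
        exact mem_iUnion₂.mpr ⟨i, hi, by rwa [Function.update_of_ne hij]⟩
      · refine Or.inl ⟨(min_le_left _ _).trans hSt, ?_⟩
        rw [← min_add_add_right, sub_add_cancel]
        exact lt_min (by linarith) ht.1

lemma exists_ae_cover_of_one_le_sum {ι : Type*} [Fintype ι] (l : ι → ℝ≥0∞) (hl : ∀ i, l i ≤ 1)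
    (hsum : 1 ≤ ∑ i, l i) :
    ∃ (P : Measure ℝ) (Z : ι → Set ℝ), IsProbabilityMeasure P ∧
      (∀ i, MeasurableSet (Z i) ∧ P (Z i) = l i) ∧ P (⋃ i, Z i)ᶜ = 0 := by
  classical
  have hl_top : ∀ i, l i ≠ ∞ := fun i => ne_top_of_le_ne_top ENNReal.one_ne_top (hl i)
  have hL : ∀ i, (l i).toReal ∈ Icc (0 : ℝ) 1 :=
    fun i => ⟨ENNReal.toReal_nonneg, by simpa using ENNReal.toReal_mono ENNReal.one_ne_top (hl i)⟩
  have hLsum : 1 ≤ ∑ i, (l i).toReal := by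
    rw [← ENNReal.toReal_sum fun i _ => hl_top i]
    simpa using ENNReal.toReal_mono (ENNReal.sum_ne_top.mpr fun i _ => hl_top i) hsum
  obtain ⟨a, ha, hcover⟩ := exists_Ico_cover (fun i => (l i).toReal) hL Finset.univ
  rw [min_eq_left hLsum] at hcover
  refine ⟨volume.restrict (Ico 0 1), fun i => Ico (a i) (a i + (l i).toReal), ⟨by simp⟩,
    fun i => ⟨measurableSet_Ico, ?_⟩, ?_⟩
  · rw [Measure.restrict_apply measurableSet_Ico,
      inter_eq_left.mpr (Ico_subset_Ico (ha i).1 (ha i).2), Real.volume_Ico, add_sub_cancel_left,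
      ENNReal.ofReal_toReal (hl_top i)]
  · rw [Measure.restrict_apply (MeasurableSet.iUnion fun i => measurableSet_Ico).compl]
    refine measure_mono_null (fun t ⟨hnot, ht⟩ => hnot ?_) measure_empty
    simpa using hcover ht

lemma map_ite_mem_prod {α β : Type*} [MeasurableSpace α] [MeasurableSpace β]
    (P : Measure α) [SFinite P] (Q : Measure β) [IsProbabilityMeasure Q] {Z : Set α}
    [DecidablePred (· ∈ Z)] (hZ : MeasurableSet Z) (c : β) :
    (P.prod Q).map (fun p => if p.1 ∈ Z then c else p.2) = P Z • Measure.dirac c + P Zᶜ • Q := by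
  ext B hB
  rw [Measure.map_apply (Measurable.ite (measurable_fst hZ) measurable_const measurable_snd) hB]
  simp only [Measure.add_apply, Measure.smul_apply, smul_eq_mul, Measure.dirac_apply' _ hB]
  have hdisj : Disjoint (Z ×ˢ (univ : Set β)) (Zᶜ ×ˢ B) :=
    disjoint_compl_right.set_prod_left _ _
  by_cases hc : c ∈ B
  · have hpre : (fun p : α × β => if p.1 ∈ Z then c else p.2) ⁻¹' B = Z ×ˢ univ ∪ Zᶜ ×ˢ B := by
      ext ⟨t, y⟩; by_cases ht : t ∈ Z <;> simp [ht, hc]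
    rw [hpre, measure_union hdisj (hZ.compl.prod hB), Measure.prod_prod, Measure.prod_prod,
      measure_univ, indicator_of_mem hc, Pi.one_apply]
  · have hpre : (fun p : α × β => if p.1 ∈ Z then c else p.2) ⁻¹' B = Zᶜ ×ˢ B := by
      ext ⟨t, y⟩; by_cases ht : t ∈ Z <;> simp [ht, hc]
    rw [hpre, Measure.prod_prod, indicator_of_notMem hc, mul_zero, zero_add]

lemma exists_isProbabilityMeasure_eq_smul {α : Type*} [MeasurableSpace α] [Nonempty α]
    (μ : Measure α) [IsFiniteMeasure μ] :
    ∃ ρ : Measure α, IsProbabilityMeasure ρ ∧ μ = μ univ • ρ := by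
  rcases eq_zero_or_neZero μ with rfl | hμ
  · exact ⟨Measure.dirac (Classical.arbitrary α), inferInstance, by simp⟩
  · refine ⟨(μ univ)⁻¹ • μ, inferInstance, ?_⟩
    rw [smul_smul, ENNReal.mul_inv_cancel (NeZero.ne (μ univ)) (measure_ne_top μ univ), one_smul]

lemma restrict_Iic_eq_smul_dirac (ν : Measure ℝ) {a : ℝ} (h : ν (Iio a) = 0) :
    ν.restrict (Iic a) = ν (Iic a) • Measure.dirac a := by
  have hdisj : Disjoint (Iio a) {a} := disjoint_singleton_right.mpr (by simp)
  rw [← Iio_union_right, Measure.restrict_union hdisj (measurableSet_singleton a),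
    Measure.restrict_eq_zero.mpr h, zero_add, Measure.restrict_singleton,
    measure_union hdisj (measurableSet_singleton a), h, zero_add]

lemma exists_isProbabilityMeasure_eq_Iic_smul_dirac_add {ν : Measure ℝ} [IsProbabilityMeasure ν]
    (hneg : ν (Iio 0) = 0) :
    ∃ ρ : Measure ℝ, IsProbabilityMeasure ρ ∧
      ν = ν (Iic 0) • Measure.dirac 0 + ν (Iic 0)ᶜ • ρ := by
  obtain ⟨ρ, hρ, hρν⟩ := exists_isProbabilityMeasure_eq_smul (ν.restrict (Iic 0)ᶜ)
  rw [Measure.restrict_apply_univ] at hρν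
  refine ⟨ρ, hρ, ?_⟩
  rw [← hρν, ← restrict_Iic_eq_smul_dirac ν hneg,
    Measure.restrict_add_restrict_compl measurableSet_Iic]

theorem exists_exclusive_of_one_le_sum {ι : Type*} [Fintype ι] (ν : ι → Measure ℝ)
    [∀ i, IsProbabilityMeasure (ν i)] (hneg : ∀ i, ν i (Iio 0) = 0)
    (hsum : 1 ≤ ∑ i, ν i (Iic 0)) :
    ∃ μ : Measure (ι → ℝ), IsProbabilityMeasure μ ∧ μ {x | ∀ i, 0 < x i} = 0 ∧
      ∀ i, μ.map (fun x => x i) = ν i := by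
  classical
  choose ρ hρ hνρ using fun i => exists_isProbabilityMeasure_eq_Iic_smul_dirac_add (hneg i)
  obtain ⟨P, Z, hP, hZ, hcover⟩ :=
    exists_ae_cover_of_one_le_sum (fun i => ν i (Iic 0)) (fun i => prob_le_one) hsum
  let f : ℝ × (ι → ℝ) → ι → ℝ := fun p i => if p.1 ∈ Z i then 0 else p.2 i
  have hf : Measurable f := measurable_pi_lambda _ fun i =>
    Measurable.ite (measurable_fst (hZ i).1) measurable_const
      ((measurable_pi_apply i).comp measurable_snd)
  refine ⟨(P.prod (Measure.pi ρ)).map f, Measure.isProbabilityMeasure_map hf.aemeasurable, ?_,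
    fun i => ?_⟩
  · have hpos : MeasurableSet {x : ι → ℝ | ∀ i, 0 < x i} := by
      rw [ofPred_forall]
      exact MeasurableSet.iInter fun i => measurableSet_lt measurable_const (measurable_pi_apply i)
    rw [Measure.map_apply hf hpos]
    refine measure_mono_null (t := (⋃ i, Z i)ᶜ ×ˢ univ) ?_
      (by rw [Measure.prod_prod, hcover, zero_mul])
    rintro ⟨t, y⟩ hy
    refine ⟨fun ht => ?_, trivial⟩
    obtain ⟨i, hi⟩ := mem_iUnion.mp ht
    simpa [f, hi] using hy i
  · set g : ℝ × ℝ → ℝ := fun p => if p.1 ∈ Z i then 0 else p.2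
    have hg : Measurable g :=
      Measurable.ite (measurable_fst (hZ i).1) measurable_const measurable_snd
    have hfi : (fun x => x i) ∘ f = g ∘ Prod.map id (fun y => y i) := rfl
    rw [Measure.map_map (measurable_pi_apply i) hf, hfi,
      ← Measure.map_map hg (measurable_id.prodMap (measurable_pi_apply i)),
      ← Measure.map_prod_map _ _ measurable_id (measurable_pi_apply i), Measure.map_id,
      (measurePreserving_eval ρ i).map_eq, map_ite_mem_prod P (ρ i) (hZ i).1,
      prob_compl_eq_one_sub (hZ i).1, (hZ i).2,
      ← prob_compl_eq_one_sub (μ := ν i) measurableSet_Iic]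
    exact (hνρ i).symm

lemma one_le_sum_measure_compl_of_map_eq {ι α : Type*} [Fintype ι] [MeasurableSpace α]
    {μ : Measure (ι → α)} [IsProbabilityMeasure μ] {ν : ι → Measure α}
    (hμν : ∀ i, μ.map (fun x => x i) = ν i) {s : Set α} (hs : MeasurableSet s)
    (hexcl : μ {x | ∀ i, x i ∈ s} = 0) :
    1 ≤ ∑ i, ν i sᶜ := by
  have hcover : univ ⊆ {x : ι → α | ∀ i, x i ∈ s} ∪ ⋃ i, (fun x => x i) ⁻¹' sᶜ := by
    intro x _
    by_cases hx : ∀ i, x i ∈ s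
    · exact Or.inl hx
    · obtain ⟨i, hi⟩ := not_forall.mp hx
      exact Or.inr (mem_iUnion.mpr ⟨i, hi⟩)
  calc 1 = μ univ := measure_univ.symm
    _ ≤ μ {x | ∀ i, x i ∈ s} + μ (⋃ i, (fun x => x i) ⁻¹' sᶜ) :=
      (measure_mono hcover).trans (measure_union_le _ _)
    _ ≤ ∑ i, μ ((fun x => x i) ⁻¹' sᶜ) := by
      rw [hexcl, zero_add]
      exact measure_iUnion_fintype_le μ _
    _ = ∑ i, ν i sᶜ := Finset.sum_congr rfl fun i _ => by
      rw [← hμν i, Measure.map_apply (measurable_pi_apply i) hs.compl]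

theorem exists_exclusive_iff_one_le_sum {ι : Type*} [Fintype ι] (ν : ι → Measure ℝ)
    [∀ i, IsProbabilityMeasure (ν i)] (hneg : ∀ i, ν i (Iio 0) = 0) :
    (∃ μ : Measure (ι → ℝ), IsProbabilityMeasure μ ∧ μ {x | ∀ i, 0 < x i} = 0 ∧
      ∀ i, μ.map (fun x => x i) = ν i) ↔ 1 ≤ ∑ i, ν i (Iic 0) := by
  refine ⟨fun ⟨μ, _, hexcl, hμν⟩ => ?_, exists_exclusive_of_one_le_sum ν hneg⟩
  simpa using one_le_sum_measure_compl_of_map_eq hμν measurableSet_Ioi hexcl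

lemma sum_toReal_le_card_sub_one_iff {ι α : Type*} [Fintype ι] [MeasurableSpace α]
    (ν : ι → Measure α) [∀ i, IsProbabilityMeasure (ν i)] {s : Set α} (hs : MeasurableSet s) :
    ∑ i, (ν i s).toReal ≤ Fintype.card ι - 1 ↔ 1 ≤ ∑ i, ν i sᶜ := by
  have hcompl : ∀ i, (ν i sᶜ).toReal = 1 - (ν i s).toReal := fun i => by
    rw [prob_compl_eq_one_sub hs, ENNReal.toReal_sub_of_le prob_le_one ENNReal.one_ne_top,
      ENNReal.toReal_one]
  rw [← ENNReal.toReal_le_toReal ENNReal.one_ne_top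
      (ENNReal.sum_ne_top.mpr fun i _ => measure_ne_top _ _),
    ENNReal.toReal_sum fun i _ => measure_ne_top _ _, ENNReal.toReal_one]
  simp only [hcompl, Finset.sum_sub_distrib, Finset.sum_const, Finset.card_univ, nsmul_eq_mul,
    mul_one]
  constructor <;> intro h <;> linarith

lemma exists_isProbabilityMeasure_Iio_eq_zero_Ioi_eq {p : ℝ≥0∞} (hp : p ≤ 1) :
    ∃ ν : Measure ℝ, IsProbabilityMeasure ν ∧ ν (Iio 0) = 0 ∧ ν (Ioi 0) = p := by
  refine ⟨(1 - p) • Measure.dirac 0 + p • Measure.dirac 1, ⟨?_⟩, ?_, ?_⟩ <;>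
    simp [Measure.dirac_apply', tsub_add_cancel_of_le hp]

theorem stmt6_general (n : ℕ) (q : Fin n → ℝ) (hq : ∀ i, q i ∈ Set.Icc (0 : ℝ) 1)
    (hsum : ∑ i, q i ≤ (n : ℝ) - 1) :
    (∃ μ : Measure (Fin n → ℝ), IsProbabilityMeasure μ ∧
      μ {x | ∃ i, x i < 0} = 0 ∧
      μ {x | ∀ i, 0 < x i} = 0 ∧
      ∀ i, (μ {x | 0 < x i}).toReal = q i)
    ∧
    (∀ ν : Fin n → Measure ℝ, (∀ i, IsProbabilityMeasure (ν i)) →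
      (∀ i, ν i (Set.Iio 0) = 0) →
      ((∃ μ : Measure (Fin n → ℝ), IsProbabilityMeasure μ ∧
          μ {x | ∀ i, 0 < x i} = 0 ∧
          ∀ i, μ.map (fun x => x i) = ν i)
        ↔ ∑ i, (ν i (Set.Ioi 0)).toReal ≤ (n : ℝ) - 1)) := by
  refine ⟨?_, fun ν _ hneg => ?_⟩
  · choose ν hν hneg hpos using fun i =>
      exists_isProbabilityMeasure_Iio_eq_zero_Ioi_eq (ENNReal.ofReal_le_one.mpr (hq i).2)
    have hsum' : 1 ≤ ∑ i, ν i (Iic 0) := by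
      rw [← compl_Ioi, ← sum_toReal_le_card_sub_one_iff ν measurableSet_Ioi, Fintype.card_fin]
      simpa [hpos, ENNReal.toReal_ofReal (hq _).1] using hsum
    obtain ⟨μ, hμ, hexcl, hμν⟩ := exists_exclusive_of_one_le_sum ν hneg hsum'
    have hmarg : ∀ i {B : Set ℝ}, MeasurableSet B → μ {x | x i ∈ B} = ν i B := fun i B hB => by
      rw [← hμν i, Measure.map_apply (measurable_pi_apply i) hB]
      rfl
    refine ⟨μ, hμ, ?_, hexcl, fun i => ?_⟩
    · rw [ofPred_exists]
      exact measure_iUnion_null fun i => (hmarg i measurableSet_Iio).trans (hneg i)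
    · rw [show μ {x | 0 < x i} = ν i (Ioi 0) from hmarg i measurableSet_Ioi, hpos,
        ENNReal.toReal_ofReal (hq i).1]
  · rw [exists_exclusive_iff_one_le_sum ν hneg, ← compl_Ioi,
      ← sum_toReal_le_card_sub_one_iff ν measurableSet_Ioi, Fintype.card_fin]

theorem stmt6 (n : ℕ) (hn : 2 ≤ n) (q : Fin n → ℝ) (hq : ∀ i, q i ∈ Set.Icc (0 : ℝ) 1)
    (hsum : ∑ i, q i ≤ (n : ℝ) - 1) :
    (∃ μ : Measure (Fin n → ℝ), IsProbabilityMeasure μ ∧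
      μ {x | ∃ i, x i < 0} = 0 ∧
      μ {x | ∀ i, 0 < x i} = 0 ∧
      ∀ i, (μ {x | 0 < x i}).toReal = q i)
    ∧
    (∀ ν : Fin n → Measure ℝ, (∀ i, IsProbabilityMeasure (ν i)) →
      (∀ i, ν i (Set.Iio 0) = 0) →
      ((∃ μ : Measure (Fin n → ℝ), IsProbabilityMeasure μ ∧
          μ {x | ∀ i, 0 < x i} = 0 ∧
          ∀ i, μ.map (fun x => x i) = ν i)
        ↔ ∑ i, (ν i (Set.Ioi 0)).toReal ≤ (n : ℝ) - 1)) :=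
  stmt6_general n q hq hsum
end

section
/- A non-negative random vector (X_1,...,X_n) is jointly exclusive if and only if E[ prod_{i=1}^n (exp(i t_i X_i) - 1) ] = 0 for all (t_1,...,t_n) in R^n, where i denotes the imaginary unit; equivalently the joint characteristic function satisfies phi_N(t) = (-1)^{n-1} ( 1 - sum_i phi_i(t_i) + sum_{I in M} (-1)^{|I|} phi_I(t_I) ). -/
/-!
Expanding the product gives `∏ₖ (1 - e^{i tₖ Xₖ}) = ∑_S (-1)^|S| e^{i ∑_{k ∈ S} tₖ Xₖ}`, so once the
terms `S = ∅`, `S = {k}` and `S = univ` are split off, `E ∏ₖ (e^{i tₖ Xₖ} - 1) = 0` is the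
inclusion–exclusion formula for `φ_N`. If `X ≥ 0` is jointly exclusive, almost surely some `Xₖ = 0`, which kills
the product.

Conversely, `1 - cos y = -((e^{iy} - 1) + (e^{-iy} - 1)) / 2`, so expanding over sign patterns gives
`E ∏ₖ (1 - cos (tₖ Xₖ)) = 0` for every `t`. The integrand is nonnegative, hence almost surely
`∏ₖ (1 - cos (q Xₖ)) = 0` for all rational `q` at once. Where every `Xₖ > 0`, a small `q > 0` puts
every `q Xₖ` in `(0, 2π)`, where the cosine is not `1`.
-/

open MeasureTheory Complex Finset

section Algebra

variable {ι : Type*} [Fintype ι]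

theorem prod_one_sub_exp_I_mul (a : ι → ℝ) :
    ∏ i, (1 - exp (I * (a i : ℂ))) =
      ∑ S : Finset ι, (-1) ^ #S * exp (I * ((∑ i ∈ S, a i : ℝ) : ℂ)) := by
  classical
  simp_rw [← neg_add_eq_sub, Fintype.prod_add, prod_const_one, mul_one, prod_neg, ← exp_sum,
    ofReal_sum, mul_sum]

theorem one_sub_cos_eq_sum_exp_I_mul_sub_one (a : ℝ) :
    ((1 - Real.cos a : ℝ) : ℂ) =
      -(1 / 2) * ∑ b : Bool, (exp (I * (((if b then 1 else -1) * a : ℝ) : ℂ)) - 1) := by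
  simp only [Fintype.sum_bool, ↓reduceIte, Bool.false_eq_true, one_mul, neg_one_mul, ofReal_sub,
    ofReal_one, ofReal_cos, ofReal_neg, cos]
  ring_nf

theorem prod_one_sub_cos_eq_sum_prod [DecidableEq ι] (a : ι → ℝ) :
    ((∏ i, (1 - Real.cos (a i)) : ℝ) : ℂ) =
      (-(1 / 2)) ^ Fintype.card ι * ∑ σ : ι → Bool,
        ∏ i, (exp (I * (((if σ i then 1 else -1) * a i : ℝ) : ℂ)) - 1) := by
  simp_rw [ofReal_prod, one_sub_cos_eq_sum_exp_I_mul_sub_one, prod_mul_distrib, prod_const,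
    Fintype.prod_sum, card_univ]

theorem sum_finset_eq_empty_add_sum_singleton_add_sum_add_univ {M : Type*} [AddCommMonoid M]
    (hι : 2 ≤ Fintype.card ι) (f : Finset ι → M) :
    ∑ S, f S = f ∅ + ∑ i, f {i} +
      ∑ S with 2 ≤ #S ∧ #S ≤ Fintype.card ι - 1, f S + f univ := by
  classical
  have hrest : univ.filter (fun S : Finset ι => ¬(2 ≤ #S ∧ #S ≤ Fintype.card ι - 1)) =
      insert ∅ (insert univ (univ.map ⟨singleton, singleton_injective⟩)) := by
    ext S
    simp only [mem_filter, mem_univ, true_and, mem_insert, mem_map, Function.Embedding.coeFn_mk]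
    simp_rw [eq_comm (b := S)]
    rw [← card_eq_zero, ← card_eq_iff_eq_univ, ← card_eq_one]
    have := card_le_univ S
    omega
  have h_empty : (∅ : Finset ι) ∉ insert univ (univ.map ⟨singleton, singleton_injective⟩) := by
    simp only [mem_insert, eq_comm (a := (∅ : Finset ι)), ← card_eq_zero, card_univ, mem_map,
      mem_univ, Function.Embedding.coeFn_mk, card_singleton, one_ne_zero, and_false, exists_false,
      or_false]
    omega
  have h_univ : univ ∉ univ.map ⟨(singleton : ι → Finset ι), singleton_injective⟩ := by
    simp only [mem_map, mem_univ, Function.Embedding.coeFn_mk, ← card_eq_iff_eq_univ,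
      card_singleton, true_and, exists_const_iff, not_and, Nonempty.forall]
    omega
  rw [← sum_filter_add_sum_filter_not univ (fun S : Finset ι => 2 ≤ #S ∧ #S ≤ Fintype.card ι - 1),
    hrest, sum_insert h_empty, sum_insert h_univ, sum_map]
  simp only [Function.Embedding.coeFn_mk]
  abel

theorem add_neg_one_pow_mul_eq_zero_iff {R : Type*} [CommRing R] {n : ℕ} (hn : 1 ≤ n) (a b : R) :
    a + (-1) ^ n * b = 0 ↔ b = (-1) ^ (n - 1) * a := by
  obtain ⟨m, rfl⟩ := Nat.exists_eq_add_of_le' hn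
  have hsq : ((-1 : R) ^ m) ^ 2 = 1 := by rw [← pow_mul, pow_mul', neg_one_sq, one_pow]
  rw [Nat.add_sub_cancel, pow_succ]
  constructor <;> intro h
  · linear_combination -(-1) ^ m * h - b * hsq
  · linear_combination -(-1) ^ m * h - a * hsq

end Algebra

section Integrals

variable {ι : Type*} [Fintype ι] {Ω : Type*} [MeasurableSpace Ω] {μ : Measure Ω}
  [IsFiniteMeasure μ]

theorem integrable_prod_of_norm_le {𝕜 : Type*} [RCLike 𝕜] {f : ι → Ω → 𝕜}
    (hf : ∀ i, Measurable (f i)) {C : ℝ} (hC : ∀ i ω, ‖f i ω‖ ≤ C) :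
    Integrable (fun ω => ∏ i, f i ω) μ := by
  refine .of_bound (Finset.measurable_prod _ fun i _ => hf i).aestronglyMeasurable
    (C ^ Fintype.card ι) (.of_forall fun ω => ?_)
  rw [norm_prod, ← card_univ, ← prod_const]
  exact prod_le_prod (fun _ _ => norm_nonneg _) fun i _ => hC i ω

theorem integrable_exp_I_mul {f : Ω → ℝ} (hf : Measurable f) :
    Integrable (fun ω => exp (I * (f ω : ℂ))) μ :=
  .of_bound (by fun_prop) 1 (.of_forall fun ω => (norm_exp_I_mul_ofReal _).le)

theorem integrable_prod_exp_I_mul_sub_one {f : ι → Ω → ℝ} (hf : ∀ i, Measurable (f i)) :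
    Integrable (fun ω => ∏ i, (exp (I * (f i ω : ℂ)) - 1)) μ :=
  integrable_prod_of_norm_le (fun i => by fun_prop) (C := 2) fun i ω =>
    (norm_sub_le _ _).trans (by rw [norm_exp_I_mul_ofReal, norm_one]; norm_num)

theorem integral_prod_one_sub_exp_I_mul {f : ι → Ω → ℝ} (hf : ∀ i, Measurable (f i)) :
    ∫ ω, ∏ i, (1 - exp (I * (f i ω : ℂ))) ∂μ =
      ∑ S : Finset ι, (-1) ^ #S * ∫ ω, exp (I * ((∑ i ∈ S, f i ω : ℝ) : ℂ)) ∂μ := by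
  simp_rw [prod_one_sub_exp_I_mul]
  rw [integral_finsetSum _ fun S _ => (integrable_exp_I_mul (by fun_prop)).const_mul _]
  simp_rw [integral_const_mul]

variable {X : ι → Ω → ℝ}

theorem integral_prod_one_sub_cos_eq_zero (hX : ∀ i, Measurable (X i))
    (h : ∀ t : ι → ℝ, ∫ ω, ∏ i, (exp (I * ((t i * X i ω : ℝ) : ℂ)) - 1) ∂μ = 0) (t : ι → ℝ) :
    ∫ ω, ∏ i, (1 - Real.cos (t i * X i ω)) ∂μ = 0 := by
  classical
  apply ofReal_injective
  rw [← integral_complex_ofReal]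
  simp_rw [prod_one_sub_cos_eq_sum_prod]
  rw [integral_const_mul, integral_finsetSum _ fun σ _ =>
    integrable_prod_exp_I_mul_sub_one fun i => by fun_prop]
  simp_rw [← mul_assoc, h, sum_const_zero, mul_zero, ofReal_zero]

theorem ae_prod_one_sub_cos_eq_zero (hX : ∀ i, Measurable (X i))
    (h : ∀ t : ι → ℝ, ∫ ω, ∏ i, (exp (I * ((t i * X i ω : ℝ) : ℂ)) - 1) ∂μ = 0) (t : ι → ℝ) :
    ∀ᵐ ω ∂μ, ∏ i, (1 - Real.cos (t i * X i ω)) = 0 := by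
  have hint : Integrable (fun ω => ∏ i, (1 - Real.cos (t i * X i ω))) μ :=
    integrable_prod_of_norm_le (fun i => by fun_prop) (C := 2) fun i ω => by
      rw [Real.norm_eq_abs, abs_le]
      constructor <;> linarith [Real.cos_le_one (t i * X i ω), Real.neg_one_le_cos (t i * X i ω)]
  exact (integral_eq_zero_iff_of_nonneg
    (fun ω => prod_nonneg fun i _ => sub_nonneg.2 (Real.cos_le_one _)) hint).1
    (integral_prod_one_sub_cos_eq_zero hX h t)

end Integrals

theorem integral_prod_exp_I_mul_sub_one_eq_zero_iff {ι : Type*} [Fintype ι] {Ω : Type*}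
    [MeasurableSpace Ω] {μ : Measure Ω} [IsProbabilityMeasure μ] {X : ι → Ω → ℝ}
    (hι : 2 ≤ Fintype.card ι) (hX : ∀ i, Measurable (X i)) (t : ι → ℝ) :
    ∫ ω, ∏ i, (exp (I * ((t i * X i ω : ℝ) : ℂ)) - 1) ∂μ = 0 ↔
      ∫ ω, exp (I * ((∑ i, t i * X i ω : ℝ) : ℂ)) ∂μ =
        (-1) ^ (Fintype.card ι - 1) *
          (1 - ∑ i, ∫ ω, exp (I * ((t i * X i ω : ℝ) : ℂ)) ∂μ +
            ∑ S with 2 ≤ #S ∧ #S ≤ Fintype.card ι - 1,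
              (-1) ^ #S * ∫ ω, exp (I * ((∑ i ∈ S, t i * X i ω : ℝ) : ℂ)) ∂μ) := by
  have hflip : ∫ ω, ∏ i, (exp (I * ((t i * X i ω : ℝ) : ℂ)) - 1) ∂μ =
      (-1) ^ Fintype.card ι * ∫ ω, ∏ i, (1 - exp (I * ((t i * X i ω : ℝ) : ℂ))) ∂μ := by
    rw [← integral_const_mul]
    simp_rw [← card_univ, ← prod_neg, neg_sub]
  rw [hflip, mul_eq_zero, or_iff_right (pow_ne_zero _ (neg_ne_zero.2 one_ne_zero)),
    integral_prod_one_sub_exp_I_mul fun i => by fun_prop,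
    sum_finset_eq_empty_add_sum_singleton_add_sum_add_univ hι, card_univ,
    ← add_neg_one_pow_mul_eq_zero_iff (by omega)]
  simp [sub_eq_add_neg]

theorem exists_rat_prod_one_sub_cos_ne_zero {ι : Type*} [Fintype ι] {x : ι → ℝ}
    (hx : ∀ i, 0 < x i) : ∃ q : ℚ, ∏ i, (1 - Real.cos (q * x i)) ≠ 0 := by
  have hB : 0 < 1 + ∑ i, x i := by linarith [sum_nonneg fun i (_ : i ∈ univ) => (hx i).le]
  obtain ⟨q, hq_pos, hq_lt⟩ := exists_rat_btwn (div_pos Real.two_pi_pos hB)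
  refine ⟨q, prod_ne_zero_iff.2 fun i _ => sub_ne_zero.2 fun hcos => ?_⟩
  have hqx_pos : 0 < (q : ℝ) * x i := mul_pos hq_pos (hx i)
  have hqx_lt : (q : ℝ) * x i < 2 * Real.pi := by
    have hxi : x i < 1 + ∑ j, x j := by
      linarith [single_le_sum (fun j _ => (hx j).le) (mem_univ i)]
    calc (q : ℝ) * x i < 2 * Real.pi / (1 + ∑ j, x j) * (1 + ∑ j, x j) := by
          gcongr
          exact (hx i).le
      _ = 2 * Real.pi := div_mul_cancel₀ _ hB.ne'
  have := (Real.cos_eq_one_iff_of_lt_of_lt (by linarith) hqx_lt).1 hcos.symm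
  linarith

section JointExclusivity

variable {ι : Type*} [Fintype ι] {Ω : Type*} [MeasurableSpace Ω] {μ : Measure Ω}
  {X : ι → Ω → ℝ}

theorem integral_prod_exp_I_mul_sub_one_eq_zero (hX_nonneg : ∀ᵐ ω ∂μ, ∀ i, 0 ≤ X i ω)
    (hJE : μ {ω | ∀ i, 0 < X i ω} = 0) (t : ι → ℝ) :
    ∫ ω, ∏ i, (exp (I * ((t i * X i ω : ℝ) : ℂ)) - 1) ∂μ = 0 := by
  refine integral_eq_zero_of_ae ?_
  filter_upwards [measure_eq_zero_iff_ae_notMem.1 hJE, hX_nonneg] with ω hω hω_nonneg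
  obtain ⟨i, hi⟩ : ∃ i, X i ω ≤ 0 := by simpa using hω
  refine prod_eq_zero (mem_univ i) ?_
  simp [le_antisymm hi (hω_nonneg i)]

theorem measure_forall_pos_eq_zero_of_integral_prod_exp_I_mul_sub_one [IsFiniteMeasure μ]
    (hX : ∀ i, Measurable (X i))
    (h : ∀ t : ι → ℝ, ∫ ω, ∏ i, (exp (I * ((t i * X i ω : ℝ) : ℂ)) - 1) ∂μ = 0) :
    μ {ω | ∀ i, 0 < X i ω} = 0 := by
  have hae : ∀ᵐ ω ∂μ, ∀ q : ℚ, ∏ i, (1 - Real.cos (q * X i ω)) = 0 :=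
    ae_all_iff.2 fun q => ae_prod_one_sub_cos_eq_zero hX h fun _ => q
  refine measure_eq_zero_iff_ae_notMem.2 ?_
  filter_upwards [hae] with ω hω hpos
  obtain ⟨q, hq⟩ := exists_rat_prod_one_sub_cos_ne_zero hpos
  exact hq (hω q)

end JointExclusivity

theorem stmt7 {Ω : Type*} [MeasurableSpace Ω] (μ : Measure Ω) [IsProbabilityMeasure μ]
    (n : ℕ) (hn : 2 ≤ n) (X : Fin n → Ω → ℝ) (hmeas : ∀ i, Measurable (X i))
    (hnonneg : ∀ᵐ ω ∂μ, ∀ i, 0 ≤ X i ω) :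
    (μ {ω | ∀ i, 0 < X i ω} = 0 ↔
      ∀ t : Fin n → ℝ,
        ∫ ω, ∏ i, (Complex.exp (Complex.I * ((t i * X i ω : ℝ) : ℂ)) - 1) ∂μ = 0)
    ∧
    (μ {ω | ∀ i, 0 < X i ω} = 0 ↔
      ∀ t : Fin n → ℝ,
        (∫ ω, Complex.exp (Complex.I * ((∑ i, t i * X i ω : ℝ) : ℂ)) ∂μ)
          = (-1 : ℂ) ^ (n - 1) *
            (1 - (∑ i, ∫ ω, Complex.exp (Complex.I * ((t i * X i ω : ℝ) : ℂ)) ∂μ)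
              + ∑ I ∈ Finset.univ.filter
                  (fun I : Finset (Fin n) => 2 ≤ I.card ∧ I.card ≤ n - 1),
                  (-1 : ℂ) ^ I.card *
                    ∫ ω, Complex.exp (Complex.I * ((∑ i ∈ I, t i * X i ω : ℝ) : ℂ)) ∂μ)) := by
  have hJE : μ {ω | ∀ i, 0 < X i ω} = 0 ↔
      ∀ t : Fin n → ℝ, ∫ ω, ∏ i, (exp (I * ((t i * X i ω : ℝ) : ℂ)) - 1) ∂μ = 0 :=
    ⟨integral_prod_exp_I_mul_sub_one_eq_zero hnonneg,
      measure_forall_pos_eq_zero_of_integral_prod_exp_I_mul_sub_one hmeas⟩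
  refine ⟨hJE, hJE.trans (forall_congr' fun t => ?_)⟩
  simpa only [Fintype.card_fin] using
    integral_prod_exp_I_mul_sub_one_eq_zero_iff (by simpa using hn) hmeas t
end

section
/- If X is a jointly exclusive non-negative random vector, then for all x in [0,infinity)^n, its CDF satisfies F_N(x) = 1 - sum_i F̄_i(x_i) + sum_{I in M} (-1)^{|I|} F̄_I(x_I), where F̄_I denotes the joint survival function of the subvector indexed by I. -/
/-!
Write `{X ≤ x}` as the intersection of the complements of the exceedance events `{x i < X i}`;
inclusion–exclusion turns its probability into an alternating sum of joint survival
probabilities over all index sets. Since `x ≥ 0`, the event for the full index set forces every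
coordinate to be positive, so joint exclusivity kills that term, and what remains are the empty
set, the singletons and the sets in `M`.
-/

open MeasureTheory Finset

namespace Finset

variable {ι M : Type*} [AddCommMonoid M]

theorem sum_powerset_filter_card_le_one (s : Finset ι) (f : Finset ι → M) :
    ∑ u ∈ s.powerset with #u ≤ 1, f u = f ∅ + ∑ i ∈ s, f {i} := by
  classical
  have hsplit :
      {u ∈ s.powerset | #u ≤ 1} = insert ∅ (s.map ⟨singleton, singleton_injective⟩) := by
    ext u
    simp only [mem_filter, mem_powerset, mem_insert, mem_map, Function.Embedding.coeFn_mk]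
    constructor
    · rintro ⟨hus, hu⟩
      rcases Nat.le_one_iff_eq_zero_or_eq_one.mp hu with h | h
      · exact .inl (card_eq_zero.mp h)
      · obtain ⟨i, rfl⟩ := card_eq_one.mp h
        exact .inr ⟨i, singleton_subset_iff.mp hus, rfl⟩
    · rintro (rfl | ⟨i, hi, rfl⟩) <;> simp [*]
  rw [hsplit, sum_insert (by simp), sum_map]
  rfl

end Finset

namespace MeasureTheory

variable {Ω ι : Type*} [MeasurableSpace Ω] {μ : Measure Ω} [IsFiniteMeasure μ] {s : ι → Set Ω}

theorem measureReal_biInter_compl_eq_sum_powerset (t : Finset ι)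
    (hs : ∀ i ∈ t, MeasurableSet (s i)) :
    μ.real (⋂ i ∈ t, (s i)ᶜ) = ∑ u ∈ t.powerset, (-1 : ℝ) ^ #u * μ.real (⋂ i ∈ u, s i) := by
  have hempty : {u ∈ t.powerset | ¬u.Nonempty} = {∅} := by
    ext u
    simp +contextual [not_nonempty_iff_eq_empty]
  rw [← sum_filter_not_add_sum_filter t.powerset (·.Nonempty), hempty, sum_singleton,
    ← Set.compl_iUnion₂, measureReal_compl (t.measurableSet_biUnion hs),
    measureReal_biUnion_eq_sum_powerset hs, sub_eq_add_neg, ← sum_neg_distrib]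
  simp [pow_succ]

theorem measureReal_iInter_compl_of_iInter_null [Fintype ι] (hs : ∀ i, MeasurableSet (s i))
    (hnull : μ (⋂ i, s i) = 0) :
    μ.real (⋂ i, (s i)ᶜ) = μ.real Set.univ - ∑ i, μ.real (s i)
      + ∑ u with 2 ≤ #u ∧ #u ≤ Fintype.card ι - 1, (-1 : ℝ) ^ #u * μ.real (⋂ i ∈ u, s i) := by
  classical
  have hfull : ∀ u : Finset ι, ¬(2 ≤ #u ∧ #u ≤ Fintype.card ι - 1) → ¬#u ≤ 1 →
      (-1 : ℝ) ^ #u * μ.real (⋂ i ∈ u, s i) = 0 := by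
    intro u hmid hsmall
    have hu : u = univ := card_eq_iff_eq_univ u |>.mp (by have := card_le_univ u; omega)
    simp [hu, measureReal_def, hnull]
  have hcomplete := measureReal_biInter_compl_eq_sum_powerset (μ := μ) univ fun i _ => hs i
  rw [← sum_filter_not_add_sum_filter _ fun u => 2 ≤ #u ∧ #u ≤ Fintype.card ι - 1,
    ← sum_subset (s₁ := {u ∈ univ.powerset | #u ≤ 1}) (fun u => by simp +contextual)
      (fun u hu hsmall => hfull u (mem_filter.mp hu).2 (by simpa using hsmall)),
    sum_powerset_filter_card_le_one, powerset_univ] at hcomplete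
  simpa [sub_eq_add_neg] using hcomplete

end MeasureTheory

theorem stmt8_general {Ω : Type*} [MeasurableSpace Ω] (μ : Measure Ω) [IsProbabilityMeasure μ]
    (n : ℕ) (X : Fin n → Ω → ℝ) (hmeas : ∀ i, Measurable (X i))
    (hJE : μ {ω | ∀ i, 0 < X i ω} = 0)
    (x : Fin n → ℝ) (hx : ∀ i, 0 ≤ x i) :
    (μ {ω | ∀ i, X i ω ≤ x i}).toReal
      = 1 - (∑ i, (μ {ω | x i < X i ω}).toReal)
        + ∑ I ∈ Finset.univ.filter
            (fun I : Finset (Fin n) => 2 ≤ I.card ∧ I.card ≤ n - 1),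
            (-1 : ℝ) ^ I.card * (μ {ω | ∀ i ∈ I, x i < X i ω}).toReal := by
  let exceeds (i : Fin n) : Set Ω := {ω | x i < X i ω}
  have hbelow : {ω | ∀ i, X i ω ≤ x i} = ⋂ i, (exceeds i)ᶜ := by ext; simp [exceeds]
  have hjoint (I : Finset (Fin n)) : {ω | ∀ i ∈ I, x i < X i ω} = ⋂ i ∈ I, exceeds i := by
    ext; simp [exceeds]
  have hnull : μ (⋂ i, exceeds i) = 0 :=
    measure_mono_null (fun ω hω i => (hx i).trans_lt (Set.mem_iInter.mp hω i)) hJE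
  have hincl := measureReal_iInter_compl_of_iInter_null
    (fun i => measurableSet_lt measurable_const (hmeas i)) hnull
  rw [Fintype.card_fin, probReal_univ] at hincl
  simp only [← measureReal_def, hbelow, hjoint]
  exact hincl

theorem stmt8 {Ω : Type*} [MeasurableSpace Ω] (μ : Measure Ω) [IsProbabilityMeasure μ]
    (n : ℕ) (hn : 2 ≤ n) (X : Fin n → Ω → ℝ) (hmeas : ∀ i, Measurable (X i))
    (hnonneg : ∀ᵐ ω ∂μ, ∀ i, 0 ≤ X i ω)
    (hJE : μ {ω | ∀ i, 0 < X i ω} = 0)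
    (x : Fin n → ℝ) (hx : ∀ i, 0 ≤ x i) :
    (μ {ω | ∀ i, X i ω ≤ x i}).toReal
      = 1 - (∑ i, (μ {ω | x i < X i ω}).toReal)
        + ∑ I ∈ Finset.univ.filter
            (fun I : Finset (Fin n) => 2 ≤ I.card ∧ I.card ≤ n - 1),
            (-1 : ℝ) ^ I.card * (μ {ω | ∀ i ∈ I, x i < X i ω}).toReal :=
  stmt8_general μ n X hmeas hJE x hx
end

section
/- If X is a jointly exclusive non-negative random vector with the additional property that P(X_i > 0, X_j > 0) = 0 for all pairs i < j (mutual exclusivity), then its CDF on [0,infinity)^n equals the Fréchet lower bound: F_N(x) = sum_i F_i(x_i) - (n-1) for x in the non-negative orthant (and this quantity is non-negative there). -/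
/-!
The event `{X ≤ x}` is the complement of the union of the exceedance events `{xᵢ < Xᵢ}`. For
`x ≥ 0` each of these lies inside `{0 < Xᵢ}`, so mutual exclusivity makes them pairwise null-disjoint,
the union bound becomes an equality, and so does the Fréchet lower bound
`P(⋂ Bᵢ) ≥ ∑ P(Bᵢ) - (n - 1)` for `Bᵢ = {Xᵢ ≤ xᵢ}`.
-/

open MeasureTheory Function

section FrechetLowerBound

variable {Ω ι : Type*} [MeasurableSpace Ω] {μ : Measure Ω} [IsProbabilityMeasure μ] [Fintype ι]

theorem probReal_iInter_compl_of_pairwise_aedisjoint {A : ι → Set Ω}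
    (hd : Pairwise (AEDisjoint μ on A)) (hA : ∀ i, NullMeasurableSet (A i) μ) :
    μ.real (⋂ i, (A i)ᶜ) = ∑ i, μ.real (A i)ᶜ - (Fintype.card ι - 1) := by
  have hunion : μ.real (⋃ i, A i) = ∑ i, μ.real (A i) := by
    simpa using measureReal_biUnion_finset₀ (s := Finset.univ) (fun i _ j _ hij => hd hij)
      (fun i _ => hA i)
  rw [← Set.compl_iUnion, probReal_compl_eq_one_sub₀ (.iUnion hA), hunion]
  simp only [fun i => probReal_compl_eq_one_sub₀ (hA i), Finset.sum_sub_distrib,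
    Finset.sum_const, Finset.card_univ, nsmul_eq_mul, mul_one]
  ring

end FrechetLowerBound

theorem pairwise_aedisjoint_exceedance {Ω : Type*} [MeasurableSpace Ω] {μ : Measure Ω}
    {n : ℕ} {X : Fin n → Ω → ℝ}
    (hME : ∀ i j : Fin n, i < j → μ {ω | 0 < X i ω ∧ 0 < X j ω} = 0)
    {x : Fin n → ℝ} (hx : ∀ i, 0 ≤ x i) :
    Pairwise (AEDisjoint μ on fun i => {ω | x i < X i ω}) := by
  refine (Std.Symm.pairwise_on _).2 fun i j hij => measure_mono_null ?_ (hME i j hij)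
  rintro ω ⟨hi, hj⟩
  exact ⟨(hx i).trans_lt hi, (hx j).trans_lt hj⟩

theorem stmt9_general {Ω : Type*} [MeasurableSpace Ω] (μ : Measure Ω) [IsProbabilityMeasure μ]
    (n : ℕ) (X : Fin n → Ω → ℝ) (hmeas : ∀ i, Measurable (X i))
    (hME : ∀ i j : Fin n, i < j → μ {ω | 0 < X i ω ∧ 0 < X j ω} = 0)
    (x : Fin n → ℝ) (hx : ∀ i, 0 ≤ x i) :
    (μ {ω | ∀ i, X i ω ≤ x i}).toReal
      = (∑ i, (μ {ω | X i ω ≤ x i}).toReal) - ((n : ℝ) - 1) ∧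
    0 ≤ (∑ i, (μ {ω | X i ω ≤ x i}).toReal) - ((n : ℝ) - 1) := by
  have hfrechet := probReal_iInter_compl_of_pairwise_aedisjoint
    (pairwise_aedisjoint_exceedance hME hx)
    (fun i => (measurableSet_lt measurable_const (hmeas i)).nullMeasurableSet)
  simp only [Set.compl_ofPred, not_lt, ← Set.ofPred_forall, Fintype.card_fin] at hfrechet
  simp only [← measureReal_def]
  rw [← hfrechet]
  exact ⟨rfl, measureReal_nonneg⟩

theorem stmt9 {Ω : Type*} [MeasurableSpace Ω] (μ : Measure Ω) [IsProbabilityMeasure μ]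
    (n : ℕ) (hn : 2 ≤ n) (X : Fin n → Ω → ℝ) (hmeas : ∀ i, Measurable (X i))
    (hnonneg : ∀ᵐ ω ∂μ, ∀ i, 0 ≤ X i ω)
    (hJE : μ {ω | ∀ i, 0 < X i ω} = 0)
    (hME : ∀ i j : Fin n, i < j → μ {ω | 0 < X i ω ∧ 0 < X j ω} = 0)
    (x : Fin n → ℝ) (hx : ∀ i, 0 ≤ x i) :
    (μ {ω | ∀ i, X i ω ≤ x i}).toReal
      = (∑ i, (μ {ω | X i ω ≤ x i}).toReal) - ((n : ℝ) - 1) ∧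
    0 ≤ (∑ i, (μ {ω | X i ω ≤ x i}).toReal) - ((n : ℝ) - 1) :=
  stmt9_general μ n X hmeas hME x hx
end

section
/- Let n = 3 and q_1,q_2,q_3 in [0,1] with q_1+q_2+q_3 <= 2. For lambda in [0,1] define p_I(lambda) = lambda * min_{i in I} q_i + (1-lambda) * max(q_i + q_j - 1, 0) for I = {i,j}. Then there exists lambda* in [0,1] such that sum_{I containing i} p_I(lambda*) <= q_i for each i in {1,2,3} and sum_I p_I(lambda*) >= q_1+q_2+q_3 - 1. -/
/-!
Each pair probability `p_I(λ)` interpolates between the lower Fréchet bound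
`max (q_i + q_j - 1) 0` (at `λ = 0`) and the upper one `min q_i q_j` (at `λ = 1`), and both bounds
are at least `q_i + q_j - 1`. The total `∑_I p_I(λ)` is continuous in `λ` and at `λ = 1` it is
already `≥ q₁ + q₂ + q₃ - 1`. If it is `≥ q₁ + q₂ + q₃ - 1` at `λ = 0`, take `λ* = 0`, where the
upper constraints are the classical `max (q₁ + q₂ - 1) 0 + max (q₁ + q₃ - 1) 0 ≤ q₁`. Otherwise
choose `λ*` by the intermediate value theorem with total exactly `q₁ + q₂ + q₃ - 1`; then
`p₁₂ + p₁₃ = (q₁ + q₂ + q₃ - 1) - p₂₃ ≤ q₁` because `p₂₃ ≥ q₂ + q₃ - 1`, and likewise for `q₂, q₃`.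
-/

open Set

def pairProb (q q' lam : ℝ) : ℝ :=
  lam * min q q' + (1 - lam) * max (q + q' - 1) 0

lemma pairProb_def (q q' lam : ℝ) :
    pairProb q q' lam = lam * min q q' + (1 - lam) * max (q + q' - 1) 0 := rfl

lemma pairProb_zero (q q' : ℝ) : pairProb q q' 0 = max (q + q' - 1) 0 := by
  simp [pairProb]

lemma pairProb_one (q q' : ℝ) : pairProb q q' 1 = min q q' := by
  simp [pairProb]

@[fun_prop]
lemma continuous_pairProb (q q' : ℝ) : Continuous (pairProb q q') := by
  unfold pairProb; fun_prop

lemma add_sub_one_le_pairProb {q q' lam : ℝ} (hq : q ≤ 1) (hq' : q' ≤ 1) (hlam : lam ∈ Icc 0 1) :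
    q + q' - 1 ≤ pairProb q q' lam := by
  have hmin : q + q' - 1 ≤ min q q' := le_min (by linarith) (by linarith)
  have hmax : q + q' - 1 ≤ max (q + q' - 1) 0 := le_max_left _ _
  calc q + q' - 1 = lam * (q + q' - 1) + (1 - lam) * (q + q' - 1) := by ring
    _ ≤ pairProb q q' lam := by
      unfold pairProb
      gcongr
      · exact hlam.1
      · linarith [hlam.2]

lemma max_add_max_le {a b c : ℝ} (ha : 0 ≤ a) (hb : b ≤ 1) (hc : c ≤ 1) (habc : a + b + c ≤ 2) :
    max (a + b - 1) 0 + max (a + c - 1) 0 ≤ a := by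
  rcases le_total (a + b - 1) 0 with h | h <;> rcases le_total (a + c - 1) 0 with h' | h' <;>
    simp only [max_eq_left, max_eq_right, h, h'] <;> linarith

lemma add_add_sub_one_le_min_add_min_add_min {a b c : ℝ} (ha : a ∈ Icc 0 1) (hb : b ∈ Icc 0 1)
    (hc : c ∈ Icc 0 1) : a + b + c - 1 ≤ min a b + min a c + min b c := by
  obtain ⟨ha0, ha1⟩ := ha
  obtain ⟨hb0, hb1⟩ := hb
  obtain ⟨hc0, hc1⟩ := hc
  rcases le_total a b with h | h <;> rcases le_total a c with h' | h' <;>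
    rcases le_total b c with h'' | h'' <;>
    simp only [min_eq_left, min_eq_right, h, h', h''] <;> linarith

theorem stmt11 (q1 q2 q3 : ℝ) (h1 : q1 ∈ Set.Icc (0 : ℝ) 1) (h2 : q2 ∈ Set.Icc (0 : ℝ) 1)
    (h3 : q3 ∈ Set.Icc (0 : ℝ) 1) (hsum : q1 + q2 + q3 ≤ 2) :
    ∃ lam : ℝ, lam ∈ Set.Icc (0 : ℝ) 1 ∧
      (lam * min q1 q2 + (1 - lam) * max (q1 + q2 - 1) 0)
        + (lam * min q1 q3 + (1 - lam) * max (q1 + q3 - 1) 0) ≤ q1 ∧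
      (lam * min q1 q2 + (1 - lam) * max (q1 + q2 - 1) 0)
        + (lam * min q2 q3 + (1 - lam) * max (q2 + q3 - 1) 0) ≤ q2 ∧
      (lam * min q1 q3 + (1 - lam) * max (q1 + q3 - 1) 0)
        + (lam * min q2 q3 + (1 - lam) * max (q2 + q3 - 1) 0) ≤ q3 ∧
      q1 + q2 + q3 - 1 ≤
        (lam * min q1 q2 + (1 - lam) * max (q1 + q2 - 1) 0)
          + (lam * min q1 q3 + (1 - lam) * max (q1 + q3 - 1) 0)
          + (lam * min q2 q3 + (1 - lam) * max (q2 + q3 - 1) 0) := by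
  simp only [← pairProb_def]
  set total := fun lam ↦ pairProb q1 q2 lam + pairProb q1 q3 lam + pairProb q2 q3 lam
  by_cases hzero : q1 + q2 + q3 - 1 ≤ total 0
  · refine ⟨0, ⟨le_rfl, zero_le_one⟩, ?_, ?_, ?_, hzero⟩ <;> simp only [pairProb_zero]
    · exact max_add_max_le h1.1 h2.2 h3.2 hsum
    · rw [add_comm q1 q2]
      exact max_add_max_le h2.1 h1.2 h3.2 (by linarith)
    · rw [add_comm q1 q3, add_comm q2 q3]
      exact max_add_max_le h3.1 h1.2 h2.2 (by linarith)
  have hone : q1 + q2 + q3 - 1 ≤ total 1 := by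
    simpa only [total, pairProb_one] using add_add_sub_one_le_min_add_min_add_min h1 h2 h3
  obtain ⟨lam, hlam, htotal⟩ :=
    intermediate_value_Icc zero_le_one (by fun_prop : Continuous total).continuousOn
      ⟨(not_le.mp hzero).le, hone⟩
  simp only [total] at htotal
  refine ⟨lam, hlam, ?_, ?_, ?_, htotal.ge⟩
  · linarith [add_sub_one_le_pairProb h2.2 h3.2 hlam]
  · linarith [add_sub_one_le_pairProb h1.2 h3.2 hlam]
  · linarith [add_sub_one_le_pairProb h1.2 h2.2 hlam]
end
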